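/- Let p ∈ [0,1], k ∈ ℕ, and suppose Z is a random variable over {0,1}^n that is ε-pseudorandom for all depth-k decision trees. Suppose further that for every function f in a class F and random restriction ρ ~ R_p, Pr[DT(f|_ρ) ≥ k] ≤ η. Then for ρ ~ R_p independent of Z, the distribution ρ ∘ Z is (ε + 2η)-pseudorandom for F: for every f ∈ F, |E[f(U)] - E[f(ρ ∘ Z)]| ≤ ε + 2η. -/
import Mathlib


open Finset

noncomputable section

/-- Real value of a boolean. -/
def bval (b : Bool) : ℝ := if b then 1 else 0

/-- Expectation of a boolean test under a (finitely supported) distribution on `{0,1}^n`. -/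
def Ex {n : ℕ} (μ : (Fin n → Bool) → ℝ) (f : (Fin n → Bool) → Bool) : ℝ :=
  ∑ z : Fin n → Bool, μ z * bval (f z)

/-- `μ` is a probability distribution on `{0,1}^n`. -/
def IsDist {n : ℕ} (μ : (Fin n → Bool) → ℝ) : Prop :=
  (∀ z, 0 ≤ μ z) ∧ ∑ z : Fin n → Bool, μ z = 1

/-- The uniform distribution on `{0,1}^n`. -/
def uni (n : ℕ) : (Fin n → Bool) → ℝ := fun _ => 1 / 2 ^ n

/-- The biased-coin product distribution `N_α`: each bit is 1 with probability `1/2 - α`. -/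
def coin (n : ℕ) (α : ℝ) : (Fin n → Bool) → ℝ :=
  fun z => ∏ i : Fin n, if z i then (1/2 - α : ℝ) else (1/2 + α)

/-- Hamming weight. -/
def wt {m : ℕ} (z : Fin m → Bool) : ℕ := (Finset.univ.filter fun i => z i = true).card

/-- Binary entropy function (base 2). -/
def hbin (x : ℝ) : ℝ := -(x * Real.logb 2 x + (1 - x) * Real.logb 2 (1 - x))

/-- `IsDT k f`: `f` is computed by a decision tree of depth at most `k`. -/
inductive IsDT {n : ℕ} : ℕ → ((Fin n → Bool) → Bool) → Prop
  | const (k : ℕ) (b : Bool) : IsDT k (fun _ => b)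
  | node {k : ℕ} {g h : (Fin n → Bool) → Bool} (i : Fin n)
      (hg : IsDT k g) (hh : IsDT k h)
      (hgi : ∀ z b, g (Function.update z i b) = g z)
      (hhi : ∀ z b, h (Function.update z i b) = h z) :
      IsDT (k + 1) (fun z => if z i then h z else g z)

/-- The random-restriction distribution `R_p`: each coordinate is unset (`none`)
with probability `p`, else a uniform bit. -/
def Rp (n : ℕ) (p : ℝ) : (Fin n → Option Bool) → ℝ :=
  fun ρ => ∏ i : Fin n, Option.elim (ρ i) p (fun _ => (1 - p) / 2)

/-- Composition of a restriction with an input: unset coordinates are filled from `z`. -/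
def compR {n : ℕ} (ρ : Fin n → Option Bool) (z : Fin n → Bool) : Fin n → Bool :=
  fun i => (ρ i).getD (z i)

/-- The hamSlice of `{0,1}^m` of Hamming weight exactly `w`. -/
def hamSlice (m w : ℕ) : Finset (Fin m → Bool) :=
  Finset.univ.filter fun z => wt z = w

open scoped Classical

lemma bval_nonneg (b : Bool) : 0 ≤ bval b := by unfold bval; split <;> norm_num

lemma bval_le_one (b : Bool) : bval b ≤ 1 := by unfold bval; split <;> norm_num

lemma Ex_nonneg {n : ℕ} (μ : (Fin n → Bool) → ℝ) (hμ : IsDist μ)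
    (f : (Fin n → Bool) → Bool) : 0 ≤ Ex μ f :=
  Finset.sum_nonneg fun z _ => mul_nonneg (hμ.1 z) (bval_nonneg _)

lemma Ex_le_one {n : ℕ} (μ : (Fin n → Bool) → ℝ) (hμ : IsDist μ)
    (f : (Fin n → Bool) → Bool) : Ex μ f ≤ 1 := by
  calc Ex μ f ≤ ∑ z : Fin n → Bool, μ z := by
        apply Finset.sum_le_sum
        intro z _
        have h1 := bval_le_one (f z)
        have h2 := bval_nonneg (f z)
        have h3 := hμ.1 z
        nlinarith
    _ = 1 := hμ.2

lemma uni_isDist {n : ℕ} : IsDist (uni n) := by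
  constructor
  · intro z; unfold uni; positivity
  · unfold uni
    rw [Finset.sum_const, Finset.card_univ]
    simp [Fintype.card_fun]

lemma Rp_nonneg {n : ℕ} (p : ℝ) (hp0 : 0 ≤ p) (hp1 : p ≤ 1)
    (ρ : Fin n → Option Bool) : 0 ≤ Rp n p ρ := by
  apply Finset.prod_nonneg
  intro i _
  cases ρ i <;> simp <;> linarith

lemma Rp_sum {n : ℕ} (p : ℝ) : ∑ ρ : Fin n → Option Bool, Rp n p ρ = 1 := by
  have h := Fintype.prod_sum
    (fun (_ : Fin n) (o : Option Bool) => Option.elim o p fun _ => (1 - p) / 2)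
  unfold Rp
  rw [← h]
  apply Finset.prod_eq_one
  intro i _
  rw [Fintype.sum_option, Fintype.sum_bool]
  show p + ((1 - p) / 2 + (1 - p) / 2) = 1
  ring

lemma innerSumUnif {n : ℕ} (p : ℝ) (w : Fin n → Bool) :
    ∑ ρ : Fin n → Option Bool, ∑ z : Fin n → Bool,
      (if w = compR ρ z then (1:ℝ) else 0) * (Rp n p ρ * uni n z) = uni n w := by
  have huni : ∀ z : Fin n → Bool, uni n z = ∏ _i : Fin n, (1/2 : ℝ) := by
    intro z
    simp [uni, Finset.prod_const, Finset.card_univ]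
  have hstep : ∀ (ρ : Fin n → Option Bool) (z : Fin n → Bool),
      (if w = compR ρ z then (1:ℝ) else 0) * (Rp n p ρ * uni n z)
      = ∏ i : Fin n, ((if w i = (ρ i).getD (z i) then (1:ℝ) else 0)
          * (Option.elim (ρ i) p (fun _ => (1-p)/2) * (1/2))) := by
    intro ρ z
    rw [Finset.prod_mul_distrib, Finset.prod_mul_distrib]
    congr 1
    · rw [Finset.prod_boole]
      congr 1
      simp only [eq_iff_iff]
      constructor
      · intro h i _; rw [h]; rfl
      · intro h; funext i; exact h i (Finset.mem_univ i)
    · rw [huni z]; rfl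
  simp only [hstep]
  have hz : ∀ ρ : Fin n → Option Bool,
      (∑ z : Fin n → Bool, ∏ i : Fin n,
        ((if w i = (ρ i).getD (z i) then (1:ℝ) else 0)
          * (Option.elim (ρ i) p (fun _ => (1-p)/2) * (1/2))))
      = ∏ i : Fin n, ∑ b : Bool,
        ((if w i = (ρ i).getD b then (1:ℝ) else 0)
          * (Option.elim (ρ i) p (fun _ => (1-p)/2) * (1/2))) := by
    intro ρ
    exact (Fintype.prod_sum (fun (i : Fin n) (b : Bool) =>
      (if w i = (ρ i).getD b then (1:ℝ) else 0)
        * (Option.elim (ρ i) p (fun _ => (1-p)/2) * (1/2)))).symm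
  simp only [hz]
  rw [← Fintype.prod_sum (fun (i : Fin n) (o : Option Bool) => ∑ b : Bool,
      ((if w i = Option.getD o b then (1:ℝ) else 0)
        * (Option.elim o p (fun _ => (1-p)/2) * (1/2))))]
  have hcoord : ∀ i : Fin n,
      (∑ o : Option Bool, ∑ b : Bool,
        ((if w i = (Option.getD o b) then (1:ℝ) else 0)
          * (Option.elim o p (fun _ => (1-p)/2) * (1/2)))) = 1/2 := by
    intro i
    rw [Fintype.sum_option, Fintype.sum_bool, Fintype.sum_bool, Fintype.sum_bool]
    cases hw : w i <;> simp <;> ring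
  rw [Finset.prod_congr rfl fun i _ => hcoord i, huni w]

lemma key_uniform {n : ℕ} (p : ℝ) (f : (Fin n → Bool) → Bool) :
    ∑ ρ : Fin n → Option Bool, ∑ z : Fin n → Bool,
      Rp n p ρ * uni n z * bval (f (compR ρ z)) = Ex (uni n) f := by
  have h1 : ∀ (ρ : Fin n → Option Bool) (z : Fin n → Bool),
      Rp n p ρ * uni n z * bval (f (compR ρ z))
      = ∑ w : Fin n → Bool,
          ((if w = compR ρ z then (1:ℝ) else 0) * (Rp n p ρ * uni n z)) * bval (f w) := by
    intro ρ z
    rw [Finset.sum_eq_single (compR ρ z)]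
    · simp
    · intro w _ hw; simp [hw]
    · simp
  simp only [h1]
  have hswap : ∀ ρ : Fin n → Option Bool,
      (∑ z : Fin n → Bool, ∑ w : Fin n → Bool,
        ((if w = compR ρ z then (1:ℝ) else 0) * (Rp n p ρ * uni n z)) * bval (f w))
      = ∑ w : Fin n → Bool, ∑ z : Fin n → Bool,
        ((if w = compR ρ z then (1:ℝ) else 0) * (Rp n p ρ * uni n z)) * bval (f w) :=
    fun ρ => Finset.sum_comm
  simp only [hswap]
  rw [Finset.sum_comm]
  have h2 : ∀ w : Fin n → Bool,
      (∑ ρ : Fin n → Option Bool, ∑ z : Fin n → Bool,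
        ((if w = compR ρ z then (1:ℝ) else 0) * (Rp n p ρ * uni n z)) * bval (f w))
      = uni n w * bval (f w) := by
    intro w
    rw [← innerSumUnif p w, Finset.sum_mul]
    exact (Finset.sum_congr rfl fun ρ _ => (Finset.sum_mul _ _ _).symm)
  simp only [h2]
  rfl

/-- if `Z` fools depth-`k` decision trees to error `ε` and, for each
`f ∈ F`, a random restriction `ρ ~ R_p` fails to turn `f` into a depth-`k` decision
tree with probability at most `η`, then `ρ ∘ Z` is `(ε + 2η)`-pseudorandom for `F`. -/
theorem restriction_transfer {n k : ℕ} (p ε η : ℝ) (hp0 : 0 ≤ p) (hp1 : p ≤ 1)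
    (μ : (Fin n → Bool) → ℝ) (hμ : IsDist μ)
    (hZ : ∀ g : (Fin n → Bool) → Bool, IsDT k g → |Ex μ g - Ex (uni n) g| ≤ ε)
    (F : Set ((Fin n → Bool) → Bool))
    (hη : ∀ f ∈ F,
      (∑ ρ : Fin n → Option Bool,
        if ¬ ∃ g : (Fin n → Bool) → Bool, IsDT k g ∧ ∀ z, f (compR ρ z) = g z then
          Rp n p ρ else 0) ≤ η) :
    ∀ f ∈ F,
      |Ex (uni n) f -
        ∑ ρ : Fin n → Option Bool, ∑ z : Fin n → Bool,
          Rp n p ρ * μ z * bval (f (compR ρ z))| ≤ ε + 2 * η := by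
  intro f hf
  have hε : 0 ≤ ε := le_trans (abs_nonneg _) (hZ (fun _ => false) (IsDT.const k false))
  have hRp : ∀ ρ : Fin n → Option Bool, 0 ≤ Rp n p ρ := Rp_nonneg p hp0 hp1
  have hA : Ex (uni n) f
      = ∑ ρ : Fin n → Option Bool, Rp n p ρ * Ex (uni n) (fun z => f (compR ρ z)) := by
    rw [← key_uniform p f]
    refine Finset.sum_congr rfl fun ρ _ => ?_
    rw [Ex, Finset.mul_sum]
    exact Finset.sum_congr rfl fun z _ => by ring
  have hB : (∑ ρ : Fin n → Option Bool, ∑ z : Fin n → Bool,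
        Rp n p ρ * μ z * bval (f (compR ρ z)))
      = ∑ ρ : Fin n → Option Bool, Rp n p ρ * Ex μ (fun z => f (compR ρ z)) := by
    refine Finset.sum_congr rfl fun ρ _ => ?_
    rw [Ex, Finset.mul_sum]
    exact Finset.sum_congr rfl fun z _ => by ring
  rw [hA, hB, ← Finset.sum_sub_distrib]
  have hterm : ∀ ρ : Fin n → Option Bool,
      |Rp n p ρ * Ex (uni n) (fun z => f (compR ρ z))
        - Rp n p ρ * Ex μ (fun z => f (compR ρ z))|
      ≤ Rp n p ρ * ε + 2 *
        (if ¬ ∃ g : (Fin n → Bool) → Bool, IsDT k g ∧ ∀ z, f (compR ρ z) = g z then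
          Rp n p ρ else 0) := by
    intro ρ
    rw [← mul_sub, abs_mul, abs_of_nonneg (hRp ρ)]
    by_cases hgood : ∃ g : (Fin n → Bool) → Bool, IsDT k g ∧ ∀ z, f (compR ρ z) = g z
    · obtain ⟨g, hgDT, hgeq⟩ := hgood
      have heq : ∀ ν : (Fin n → Bool) → ℝ, Ex ν (fun z => f (compR ρ z)) = Ex ν g := by
        intro ν
        exact Finset.sum_congr rfl fun z _ => by simp only [hgeq z]
      have hd : |Ex (uni n) (fun z => f (compR ρ z)) - Ex μ (fun z => f (compR ρ z))| ≤ ε := by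
        rw [heq, heq, abs_sub_comm]
        exact hZ g hgDT
      have h2 : (if ¬ ∃ g : (Fin n → Bool) → Bool, IsDT k g ∧ ∀ z, f (compR ρ z) = g z then
          Rp n p ρ else 0) = 0 := if_neg (not_not_intro ⟨g, hgDT, hgeq⟩)
      rw [h2]
      have := mul_le_mul_of_nonneg_left hd (hRp ρ)
      linarith
    · have h2 : (if ¬ ∃ g : (Fin n → Bool) → Bool, IsDT k g ∧ ∀ z, f (compR ρ z) = g z then
          Rp n p ρ else 0) = Rp n p ρ := if_pos hgood
      rw [h2]
      have hu1 : 0 ≤ Ex (uni n) (fun z => f (compR ρ z)) := Ex_nonneg _ uni_isDist _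
      have hu2 : Ex (uni n) (fun z => f (compR ρ z)) ≤ 1 := Ex_le_one _ uni_isDist _
      have hm1 : 0 ≤ Ex μ (fun z => f (compR ρ z)) := Ex_nonneg _ hμ _
      have hm2 : Ex μ (fun z => f (compR ρ z)) ≤ 1 := Ex_le_one _ hμ _
      have hd : |Ex (uni n) (fun z => f (compR ρ z)) - Ex μ (fun z => f (compR ρ z))| ≤ 2 := by
        rw [abs_le]; constructor <;> linarith
      nlinarith [hRp ρ]
  calc |∑ ρ : Fin n → Option Bool,
        (Rp n p ρ * Ex (uni n) (fun z => f (compR ρ z))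
          - Rp n p ρ * Ex μ (fun z => f (compR ρ z)))|
      ≤ ∑ ρ : Fin n → Option Bool,
        |Rp n p ρ * Ex (uni n) (fun z => f (compR ρ z))
          - Rp n p ρ * Ex μ (fun z => f (compR ρ z))| := Finset.abs_sum_le_sum_abs _ _
    _ ≤ ∑ ρ : Fin n → Option Bool, (Rp n p ρ * ε + 2 *
        (if ¬ ∃ g : (Fin n → Bool) → Bool, IsDT k g ∧ ∀ z, f (compR ρ z) = g z then
          Rp n p ρ else 0)) := Finset.sum_le_sum fun ρ _ => hterm ρ
    _ = (∑ ρ : Fin n → Option Bool, Rp n p ρ) * ε + 2 *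
        (∑ ρ : Fin n → Option Bool,
          if ¬ ∃ g : (Fin n → Bool) → Bool, IsDT k g ∧ ∀ z, f (compR ρ z) = g z then
            Rp n p ρ else 0) := by
        rw [Finset.sum_add_distrib, Finset.sum_mul, Finset.mul_sum]
    _ ≤ 1 * ε + 2 * η := by
        have := hη f hf
        rw [Rp_sum]
        linarith
    _ = ε + 2 * η := by ring
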